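/- arXiv:2008.10110 — 2 statements merged into one kernel-verified Lean document; each statement's English description precedes it below -/
import Mathlib

section
/- Let G be a precompact Hausdorff topological group and let S be a subsemigroup of G that has a conditionally inner point. Then S is a subgroup of G. -/
/-!
By pigeonhole on a finite cover of `G` by translates of a small neighbourhood, every
neighbourhood of `1` contains a positive power of any given `a`; applied to `a ^ 2` this puts
`a⁻¹` in the closure of the positive powers of `a`. Hence the closure of `S` is a subgroup.
If `x ∈ S` is a conditionally inner point with witness `U` and `y ∈ closure S`, then
`y * x⁻¹ ∈ closure S`, so some `s ∈ S` has `s⁻¹ * y` in `U ∩ closure S ⊆ S`, and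
`y = s * (s⁻¹ * y) ∈ S`.
-/

open Set Filter Topology Pointwise

section TotallyBounded

variable {G : Type*} [Group G] [UniformSpace G] [IsUniformGroup G]

theorem TotallyBounded.exists_pow_succ_mem_nhds_one (hG : TotallyBounded (univ : Set G))
    (a : G) {V : Set G} (hV : V ∈ 𝓝 1) : ∃ n : ℕ, a ^ (n + 1) ∈ V := by
  obtain ⟨W, hW, hWV⟩ := exists_nhds_split_inv hV
  obtain ⟨t, ht, hcover⟩ :=
    totallyBounded_iff_subset_finite_iUnion_nhds_one.mp hG W⁻¹ (inv_mem_nhds_one G hW)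
  have hmem : ∀ n : ℕ, ∃ y ∈ t, a ^ n ∈ y • W⁻¹ := fun n => by
    simpa only [mem_iUnion₂, exists_prop] using hcover (mem_univ (a ^ n))
  choose c hct hc using hmem
  obtain ⟨m, n, hmn, hcmn⟩ := Finite.exists_lt_map_eq_of_forall_mem hct ht
  obtain ⟨v, hv, hvm⟩ := hc m
  obtain ⟨w, hw, hwn⟩ := hc n
  refine ⟨n - m - 1, ?_⟩
  have hpow : a ^ (n - m - 1 + 1) = (a ^ m)⁻¹ * a ^ n := by
    rw [eq_inv_mul_iff_mul_eq, ← pow_add]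
    congr 1
    omega
  have hvw : (a ^ m)⁻¹ * a ^ n = v⁻¹ / w⁻¹ := by
    rw [← hvm, ← hwn, hcmn]
    simp only [smul_eq_mul, mul_inv_rev, div_inv_eq_mul, mul_assoc, inv_mul_cancel_left]
  rw [hpow, hvw]
  exact hWV _ (Set.mem_inv.mp hv) _ (Set.mem_inv.mp hw)

theorem TotallyBounded.inv_mem_closure_range_pow_succ (hG : TotallyBounded (univ : Set G))
    (a : G) : a⁻¹ ∈ _root_.closure (range fun n : ℕ => a ^ (n + 1)) := by
  rw [mem_closure_iff_nhds]
  intro O hO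
  have hV : (a⁻¹ * ·) ⁻¹' O ∈ 𝓝 (1 : G) :=
    (continuous_const_mul a⁻¹).continuousAt.preimage_mem_nhds (by simpa using hO)
  obtain ⟨n, hn⟩ := hG.exists_pow_succ_mem_nhds_one (a ^ 2) hV
  have hpow : a⁻¹ * (a ^ 2) ^ (n + 1) = a ^ (2 * n + 1) := by
    rw [← pow_mul, inv_mul_eq_iff_eq_mul, ← pow_succ']
    congr 1
  exact ⟨a ^ (2 * n + 1), hpow ▸ hn, 2 * n, rfl⟩

theorem Subsemigroup.pow_succ_mem {M : Type*} [Monoid M] (T : Subsemigroup M) {a : M}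
    (ha : a ∈ T) (n : ℕ) : a ^ (n + 1) ∈ T := by
  induction n with
  | zero => simpa using ha
  | succ n ih => simpa only [pow_succ] using T.mul_mem ih ha

theorem Subsemigroup.inv_mem_of_isClosed (hG : TotallyBounded (univ : Set G))
    (T : Subsemigroup G) (hT : IsClosed (T : Set G)) {a : G} (ha : a ∈ T) : a⁻¹ ∈ T :=
  closure_minimal (range_subset_iff.mpr (T.pow_succ_mem ha)) hT
    (hG.inv_mem_closure_range_pow_succ a)

theorem Subsemigroup.exists_subgroup_coe_eq_of_isClosed (hG : TotallyBounded (univ : Set G))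
    (T : Subsemigroup G) (hT : IsClosed (T : Set G)) (hne : (T : Set G).Nonempty) :
    ∃ H : Subgroup G, (H : Set G) = T := by
  obtain ⟨a, ha⟩ := hne
  have hinv {b : G} (hb : b ∈ T) : b⁻¹ ∈ T := T.inv_mem_of_isClosed hG hT hb
  exact ⟨{ carrier := T, mul_mem' := T.mul_mem,
            one_mem' := by simpa using T.mul_mem ha (hinv ha), inv_mem' := hinv }, rfl⟩

end TotallyBounded

theorem Subgroup.coe_eq_of_conditionallyInnerPoint {G : Type*} [Group G] [TopologicalSpace G]
    [IsTopologicalGroup G] (H : Subgroup G) (S : Subsemigroup G) (hSH : (S : Set G) ⊆ H)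
    (hHS : (H : Set G) ⊆ _root_.closure S) {x : G} (hx : x ∈ S) {U : Set G} (hU : IsOpen U)
    (hxU : x ∈ U) (hUS : _root_.closure S ∩ U ⊆ S) : (H : Set G) = S := by
  refine Subset.antisymm (fun y hy => ?_) hSH
  have hyx : y * x⁻¹ ∈ _root_.closure (S : Set G) := hHS (H.mul_mem hy (H.inv_mem (hSH hx)))
  have hopen : IsOpen {g : G | g⁻¹ * y ∈ U} := hU.preimage (by fun_prop)
  obtain ⟨s, hsU, hs⟩ :=
    mem_closure_iff.mp hyx _ hopen (by simpa only [mem_ofPred_eq, mul_inv_rev, inv_inv,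
      inv_mul_cancel_right] using hxU)
  have hsy : s⁻¹ * y ∈ S := hUS ⟨hHS (H.mul_mem (H.inv_mem (hSH hs)) hy), hsU⟩
  simpa using S.mul_mem hs hsy

theorem stmt_6_general {G : Type*} [Group G] [UniformSpace G] [IsUniformGroup G]
    (hpre : TotallyBounded (Set.univ : Set G))
    (S : Set G) (hmul : ∀ a ∈ S, ∀ b ∈ S, a * b ∈ S)
    (hcip : ∃ x ∈ S, ∃ U : Set G, IsOpen U ∧ x ∈ closure S ∩ U ∧
      closure S ∩ U ⊆ S) :
    ∃ H : Subgroup G, S = (H : Set G) := by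
  obtain ⟨x, hxS, U, hU, ⟨-, hxU⟩, hUS⟩ := hcip
  let T : Subsemigroup G := { carrier := S, mul_mem' := fun ha hb => hmul _ ha _ hb }
  obtain ⟨H, hH⟩ := T.topologicalClosure.exists_subgroup_coe_eq_of_isClosed hpre
    T.isClosed_topologicalClosure ⟨x, subset_closure hxS⟩
  have hTH : (T : Set G) ⊆ H := hH ▸ T.le_topologicalClosure
  exact ⟨H, (H.coe_eq_of_conditionallyInnerPoint T hTH hH.le hxS hU hxU hUS).symm⟩

/-- A subsemigroup of a precompact Hausdorff topological group that has a
conditionally inner point is a subgroup. -/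
theorem stmt_6 {G : Type*} [Group G] [UniformSpace G] [IsUniformGroup G]
    [T2Space G] (hpre : TotallyBounded (Set.univ : Set G))
    (S : Set G) (hne : S.Nonempty) (hmul : ∀ a ∈ S, ∀ b ∈ S, a * b ∈ S)
    (hcip : ∃ x ∈ S, ∃ U : Set G, IsOpen U ∧ x ∈ closure S ∩ U ∧
      closure S ∩ U ⊆ S) :
    ∃ H : Subgroup G, S = (H : Set G) :=
  stmt_6_general hpre S hmul hcip
end

section
/- Let G be a compact Hausdorff topological group and let S be a subsemigroup of G that is locally compact in the subspace topology. Then S is a compact subgroup of G (in particular S is closed in G). -/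
/-!
Let `H` be the closure of `S`. In a compact group every element `s` is a cluster point of its
own positive powers `s ^ n`, and so is `s⁻¹`; hence `H` is a closed, so compact, subgroup.
A locally compact subspace of a Hausdorff space is locally closed, so `S` is open in `H`.
For `h ∈ H` the set `h S⁻¹` is then dense in `H` and meets the nonempty relatively open set `S`,
so `h ∈ S S ⊆ S`: thus `S = H`.
-/

open Set Filter

theorem isLocallyClosed_of_locallyCompactSpace {X : Type*} [TopologicalSpace X] [T2Space X]
    {s : Set X} [LocallyCompactSpace s] : IsLocallyClosed s := by
  refine ((isLocallyClosed_tfae s).out 0 3).mpr fun x hx ↦ ?_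
  obtain ⟨K, hK, hKx⟩ := exists_compact_mem_nhds (⟨x, hx⟩ : s)
  obtain ⟨u, hu, huK⟩ := (mem_nhds_subtype _ _ _).mp hKx
  obtain ⟨U, hUu, hU, hxU⟩ := mem_nhds_iff.mp hu
  refine ⟨U, hxU, hU, ?_⟩
  have hUK : U ∩ s ⊆ Subtype.val '' K := fun y ⟨hyU, hys⟩ ↦ ⟨⟨y, hys⟩, huK (hUu hyU), rfl⟩
  calc U ∩ closure s ⊆ closure (U ∩ s) := hU.inter_closure
    _ ⊆ Subtype.val '' K := closure_minimal hUK (hK.image continuous_subtype_val).isClosed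
    _ ⊆ s := Subtype.coe_image_subset s K

namespace Subsemigroup

variable {G : Type*} [Group G] [TopologicalSpace G] [IsTopologicalGroup G]

theorem zpow_mem_topologicalClosure [CompactSpace G] (S : Subsemigroup G) {s : G} (hs : s ∈ S)
    (m : ℤ) : s ^ m ∈ S.topologicalClosure := by
  have pow_mem (k : ℕ) : s ^ (k + 1) ∈ S := by
    induction k with
    | zero => simpa using hs
    | succ k ih => rw [pow_succ]; exact S.mul_mem ih hs
  refine (mapClusterPt_self_zpow_atTop_pow s m).mem_closure_of_mem _
    (Filter.mem_map.mpr (mem_atTop_sets.mpr ⟨1, fun n hn ↦ ?_⟩))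
  obtain ⟨k, rfl⟩ := Nat.exists_eq_add_of_le' hn
  exact pow_mem k

theorem inv_mem_topologicalClosure [CompactSpace G] (S : Subsemigroup G) {t : G}
    (ht : t ∈ S.topologicalClosure) : t⁻¹ ∈ S.topologicalClosure := by
  have hSinv : (S : Set G)⁻¹ ⊆ S.topologicalClosure := fun s hs ↦ by
    simpa using S.zpow_mem_topologicalClosure hs (-1)
  have : t⁻¹ ∈ _root_.closure (S : Set G)⁻¹ := by
    rw [← inv_closure]; exact inv_mem_inv.mpr ht
  exact closure_minimal hSinv isClosed_closure this

def topologicalClosureSubgroup [CompactSpace G] (S : Subsemigroup G) (hS : (S : Set G).Nonempty) :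
    Subgroup G where
  toSubsemigroup := S.topologicalClosure
  one_mem' := by simpa using S.zpow_mem_topologicalClosure hS.some_mem 0
  inv_mem' := S.inv_mem_topologicalClosure

theorem eq_of_topologicalClosure_eq_of_isLocallyClosed (S : Subsemigroup G) (H : Subgroup G)
    (hSH : S.topologicalClosure = H.toSubsemigroup) (hS : IsLocallyClosed (S : Set G)) :
    S = H.toSubsemigroup := by
  have hcl : _root_.closure (S : Set G) = H := congrArg SetLike.coe hSH
  have mem_H {x : G} (hx : x ∈ S) : x ∈ H := by
    rw [← SetLike.mem_coe, ← hcl]; exact _root_.subset_closure hx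
  refine le_antisymm (fun x hx ↦ mem_H hx) fun h (hh : h ∈ H) ↦ ?_
  obtain ⟨s₀, hs₀⟩ : (S : Set G).Nonempty := by
    rw [← closure_nonempty_iff, hcl]; exact ⟨1, H.one_mem⟩
  -- `h = (h * s⁻¹) * s`, where `s ∈ S` is chosen so that `h * s⁻¹` lies in the open set
  -- `coborder S`, whose trace on `closure S = H` is `S`.
  set V := (fun x ↦ h * x⁻¹) ⁻¹' coborder (S : Set G)
  have hV : IsOpen V := hS.isOpen_coborder.preimage (by fun_prop)
  have hs₀V : s₀⁻¹ * h ∈ _root_.closure (S : Set G) ∩ V := by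
    refine ⟨hcl ▸ H.mul_mem (H.inv_mem (mem_H hs₀)) hh, ?_⟩
    simpa [V] using subset_coborder hs₀
  obtain ⟨s, hs, hsV⟩ := (closure_inter_open_nonempty_iff hV).mp ⟨_, hs₀V⟩
  have hhs : h * s⁻¹ ∈ S := by
    rw [← SetLike.mem_coe, ← coborder_inter_closure (s := (S : Set G)), hcl]
    exact ⟨hsV, H.mul_mem hh (H.inv_mem (mem_H hs))⟩
  simpa using S.mul_mem hhs hs

end Subsemigroup

/-- F. Wright's theorem: any locally compact subsemigroup of a compact
Hausdorff topological group is a compact (in particular closed) subgroup. -/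
theorem stmt_10 {G : Type*} [Group G] [TopologicalSpace G] [IsTopologicalGroup G]
    [T2Space G] [CompactSpace G]
    (S : Set G) (hne : S.Nonempty) (hmul : ∀ a ∈ S, ∀ b ∈ S, a * b ∈ S)
    (hlc : LocallyCompactSpace S) :
    IsCompact S ∧ IsClosed S ∧ ∃ H : Subgroup G, S = (H : Set G) := by
  let T : Subsemigroup G := ⟨S, fun {a b} ha hb ↦ hmul a ha b hb⟩
  let H := T.topologicalClosureSubgroup hne
  have hSH : S = H := congrArg SetLike.coe <|
    T.eq_of_topologicalClosure_eq_of_isLocallyClosed H rfl isLocallyClosed_of_locallyCompactSpace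
  have hH : IsClosed (H : Set G) := isClosed_closure
  exact ⟨hSH ▸ hH.isCompact, hSH ▸ hH, H, hSH⟩
end
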